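/- arXiv:2210.00414 — 4 statements merged into one kernel-verified Lean document; each statement's English description precedes it below -/
import Mathlib

section
/- (Claim C) Under the network hypotheses, the half-line L = {t·v : t ≥ 0} ⊂ ℝ^n is F-invariant: F(L) ⊆ L. -/
/-- The activation function `f_i` with parameters `ρ`, `δ`, `v` (here `v = v_i`). -/
noncomputable def act (ρ δ v : ℝ) (x : ℝ) : ℝ :=
  if x < 2 * (1 - δ) * ρ * v then x / (2 * ρ) + δ * v
  else if x ≤ ρ * v then x / (2 * ρ) + (δ - 1) * v
  else v / 2 + (δ - 1) * v

/-- The Hopfield network map `F : ℝ^n → ℝ^n`, `F_i(x) = f_i (∑_j w_{ij} x_j)`. -/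
noncomputable def net {n : ℕ} (W : Matrix (Fin n) (Fin n) ℝ) (ρ δ : ℝ)
    (v : Fin n → ℝ) (x : Fin n → ℝ) : Fin n → ℝ :=
  fun i => act ρ δ (v i) (∑ j, W i j * x j)

/-!
Since `v` is an eigenvector, `W (t v) = t ρ v`, and every branch of `f_i` at `t ρ v_i` is
`v_i` times an expression in `t` and `δ` alone, so `F (t v) = g(t) v` for a scalar map `g`
independent of `i`. For `δ ≥ 1/2` this `g` maps `[0, ∞)` into itself.
-/

noncomputable def rayAct (δ t : ℝ) : ℝ :=
  if t < 2 * (1 - δ) then t / 2 + δ else if t ≤ 1 then t / 2 + (δ - 1) else δ - 1 / 2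

lemma rayAct_nonneg {δ t : ℝ} (hδ : 1 / 2 ≤ δ) (ht : 0 ≤ t) : 0 ≤ rayAct δ t := by
  unfold rayAct
  split_ifs with h₁
  · linarith
  · linarith [not_lt.mp h₁]
  · linarith

lemma act_mul_eq {ρ δ v : ℝ} (hρ : 0 < ρ) (hv : 0 < v) (t : ℝ) :
    act ρ δ v (t * (ρ * v)) = rayAct δ t * v := by
  have hρv : 0 < ρ * v := mul_pos hρ hv
  have hc₁ : t * (ρ * v) < 2 * (1 - δ) * ρ * v ↔ t < 2 * (1 - δ) := by
    rw [mul_assoc _ ρ v]; exact mul_lt_mul_iff_left₀ hρv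
  have hc₂ : t * (ρ * v) ≤ ρ * v ↔ t ≤ 1 := by
    conv_lhs => rhs; rw [← one_mul (ρ * v)]
    exact mul_le_mul_iff_left₀ hρv
  unfold act rayAct
  simp only [hc₁, hc₂]
  split_ifs
  · field_simp
  · field_simp
  · field_simp; ring

lemma net_smul_of_mulVec_eq {n : ℕ} {W : Matrix (Fin n) (Fin n) ℝ} {ρ δ : ℝ} {v : Fin n → ℝ}
    (heig : W.mulVec v = ρ • v) (hρ : 0 < ρ) (hv : ∀ i, 0 < v i) (t : ℝ) :
    net W ρ δ v (t • v) = rayAct δ t • v := by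
  funext i
  have hWtv : (W.mulVec (t • v)) i = t * (ρ * v i) := by
    rw [Matrix.mulVec_smul, heig]; rfl
  simp only [net, Pi.smul_apply, smul_eq_mul]
  rw [← act_mul_eq hρ (hv i), ← hWtv]
  rfl

theorem claimC_general {n : ℕ} (W : Matrix (Fin n) (Fin n) ℝ) (ρ δ : ℝ) (v : Fin n → ℝ)
    (heig : W.mulVec v = ρ • v)
    (hv : ∀ i, 0 < v i)
    (h1 : 1 / 2 < 2 * (1 - δ)) (h2 : 2 * (1 - δ) < ρ) (h3 : ρ < 1) :
    net W ρ δ v '' {x : Fin n → ℝ | ∃ t : ℝ, 0 ≤ t ∧ x = t • v} ⊆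
      {x : Fin n → ℝ | ∃ t : ℝ, 0 ≤ t ∧ x = t • v} := by
  rintro _ ⟨_, ⟨t, ht, rfl⟩, rfl⟩
  have hρ : 0 < ρ := by linarith
  have hδ : 1 / 2 ≤ δ := by linarith
  exact ⟨rayAct δ t, rayAct_nonneg hδ ht, net_smul_of_mulVec_eq heig hρ hv t⟩

/-- Claim C: under the network hypotheses, the half-line `L = {t·v : t ≥ 0}` is
invariant under the network map: `F(L) ⊆ L`. -/
theorem claimC {n : ℕ} (W : Matrix (Fin n) (Fin n) ℝ) (ρ δ : ℝ) (v : Fin n → ℝ)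
    (hWpos : ∀ i j, 0 < W i j)
    (heig : W.mulVec v = ρ • v)
    (hv : ∀ i, 0 < v i) (hsum : ∑ i, v i = 1)
    (h1 : 1 / 2 < 2 * (1 - δ)) (h2 : 2 * (1 - δ) < ρ) (h3 : ρ < 1) :
    net W ρ δ v '' {x : Fin n → ℝ | ∃ t : ℝ, 0 ≤ t ∧ x = t • v} ⊆
      {x : Fin n → ℝ | ∃ t : ℝ, 0 ≤ t ∧ x = t • v} :=
  claimC_general W ρ δ v heig hv h1 h2 h3
end

section
/- (Claim D, semiconjugacy) Under the network hypotheses, for every t ≥ 0 one has F(t·v) = g̃(t)·v, where g̃ is the one-dimensional piecewise-affine map determined by δ. Equivalently, with the homeomorphism h : L → [0,∞), h(s·v) = s, the identity h(F(x)) = g̃(h(x)) holds for all x ∈ L = {t·v : t ≥ 0}. -/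
/-- The one-dimensional piecewise-affine map `g̃ : [0,∞) → ℝ` determined by `δ`:
`g̃(t) = t/2 + δ` on `[0, 2(1−δ))`, `g̃(t) = t/2 + δ − 1` on `[2(1−δ), 1]`, and
`g̃(t) = δ − 1/2` for `t > 1`. -/
noncomputable def gTilde (δ : ℝ) (t : ℝ) : ℝ :=
  if t < 2 * (1 - δ) then t / 2 + δ
  else if t ≤ 1 then t / 2 + δ - 1
  else δ - 1 / 2

/-! On the ray through the eigenvector `v`, the `i`-th input of the network is `t ρ v_i`, and
every breakpoint of `f_i` is `ρ v_i` times the corresponding breakpoint of `g̃`. Since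
`f_i` has slope `1/(2ρ)`, each affine piece of `f_i` at `t ρ v_i` is `v_i` times the
matching piece of `g̃` at `t`. -/

lemma act_mul_eq_gTilde_mul {ρ δ v : ℝ} (hρ : 0 < ρ) (hv : 0 < v) (t : ℝ) :
    act ρ δ v (t * ρ * v) = gTilde δ t * v := by
  have hρv : 0 < ρ * v := mul_pos hρ hv
  have hlt : t * ρ * v < 2 * (1 - δ) * ρ * v ↔ t < 2 * (1 - δ) := by
    rw [mul_assoc t, mul_assoc (2 * (1 - δ))]
    exact mul_lt_mul_iff_left₀ hρv
  have hle : t * ρ * v ≤ ρ * v ↔ t ≤ 1 := by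
    rw [mul_assoc t]
    exact mul_le_iff_le_one_left hρv
  simp only [act, gTilde, hlt, hle]
  split_ifs <;> field_simp <;> ring

lemma net_apply {n : ℕ} (W : Matrix (Fin n) (Fin n) ℝ) (ρ δ : ℝ) (v x : Fin n → ℝ) (i : Fin n) :
    net W ρ δ v x i = act ρ δ (v i) (W.mulVec x i) :=
  rfl

theorem claimD_general {n : ℕ} (W : Matrix (Fin n) (Fin n) ℝ) (ρ δ : ℝ) (v : Fin n → ℝ)
    (heig : W.mulVec v = ρ • v)
    (hv : ∀ i, 0 < v i)
    (h1 : 1 / 2 < 2 * (1 - δ)) (h2 : 2 * (1 - δ) < ρ) :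
    ∀ t : ℝ, 0 ≤ t → net W ρ δ v (t • v) = gTilde δ t • v := by
  intro t _
  have hρ : 0 < ρ := by linarith
  funext i
  have hinput : W.mulVec (t • v) i = t * ρ * v i := by
    rw [Matrix.mulVec_smul, heig, smul_smul, Pi.smul_apply, smul_eq_mul, mul_comm t]
  rw [net_apply, hinput, act_mul_eq_gTilde_mul hρ (hv i), Pi.smul_apply, smul_eq_mul]

/-- Claim D (semiconjugacy): under the network hypotheses, `F(t·v) = g̃(t)·v` for
every `t ≥ 0`; equivalently, via the homeomorphism `h(s·v) = s` of the half-line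
`L = {t·v : t ≥ 0}` with `[0,∞)`, we have `h(F(x)) = g̃(h(x))` for all `x ∈ L`. -/
theorem claimD {n : ℕ} (W : Matrix (Fin n) (Fin n) ℝ) (ρ δ : ℝ) (v : Fin n → ℝ)
    (hWpos : ∀ i j, 0 < W i j)
    (heig : W.mulVec v = ρ • v)
    (hv : ∀ i, 0 < v i) (hsum : ∑ i, v i = 1)
    (h1 : 1 / 2 < 2 * (1 - δ)) (h2 : 2 * (1 - δ) < ρ) (h3 : ρ < 1) :
    ∀ t : ℝ, 0 ≤ t → net W ρ δ v (t • v) = gTilde δ t • v :=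
  claimD_general W ρ δ v heig hv h1 h2
end

section
/- (Claim E, transport of ω-limit sets) Under the network hypotheses, suppose C ⊆ [0,1] is a Cantor set such that for every t_0 ∈ C the ω-limit set of t_0 under g equals C. Let C_L = {t·v : t ∈ C} ⊂ ℝ^n. Then C_L is a Cantor set and, for every initial state x_0 ∈ C_L, the ω-limit set of x_0 under the network map F equals C_L. -/
/-- The Hopfield network map `F` on `ℝ^n` (with the Euclidean norm),
`F_i(x) = f_i (∑_j w_{ij} x_j)`. -/
noncomputable def netE {n : ℕ} (W : Matrix (Fin n) (Fin n) ℝ) (ρ δ : ℝ)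
    (v : EuclideanSpace ℝ (Fin n)) (x : EuclideanSpace ℝ (Fin n)) :
    EuclideanSpace ℝ (Fin n) :=
  WithLp.toLp 2 (fun i => act ρ δ (v i) (∑ j, W i j * x j))

/-- The piecewise-affine map `g : [0,1] → [0,1]`:
`g(t) = t/2 + δ` on `[0, 2(1−δ))` and `g(t) = t/2 + δ − 1` on `[2(1−δ), 1]`. -/
noncomputable def gMap (δ : ℝ) (t : ℝ) : ℝ :=
  if t < 2 * (1 - δ) then t / 2 + δ else t / 2 + δ - 1

/-- A Cantor set: a nonempty compact set that is perfect and totally disconnected. -/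
def IsCantorSet {X : Type*} [TopologicalSpace X] (C : Set X) : Prop :=
  C.Nonempty ∧ IsCompact C ∧ Perfect C ∧ IsTotallyDisconnected C

/-- The ω-limit set of `x` under `f`: all limits of subsequences of the orbit. -/
def omegaLimitSet {X : Type*} [TopologicalSpace X] (f : X → X) (x : X) : Set X :=
  {p | ∃ φ : ℕ → ℕ, StrictMono φ ∧
    Filter.Tendsto (fun k => f^[φ k] x) Filter.atTop (nhds p)}

open Set Filter Topology Function

theorem Perfect.image_of_isClosedEmbedding {X Y : Type*} [TopologicalSpace X] [TopologicalSpace Y]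
    {f : X → Y} (hf : IsClosedEmbedding f) {C : Set X} (hC : Perfect C) : Perfect (f '' C) := by
  refine ⟨hf.isClosedMap C hC.closed, ?_⟩
  rintro _ ⟨x, hx, rfl⟩
  simpa only [map_principal] using
    (hC.acc x hx).map hf.continuous.continuousAt hf.injective

theorem IsCantorSet.image_of_isClosedEmbedding {X Y : Type*} [TopologicalSpace X]
    [TopologicalSpace Y] {f : X → Y} (hf : IsClosedEmbedding f) {C : Set X}
    (hC : IsCantorSet C) : IsCantorSet (f '' C) := by
  obtain ⟨hne, hcomp, hperf, htd⟩ := hC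
  exact ⟨hne.image f, hcomp.image hf.continuous, hperf.image_of_isClosedEmbedding hf,
    hf.isEmbedding.isTotallyDisconnected_image.mpr htd⟩

theorem iterate_apply_eq_of_mapsTo {α β : Type*} {f : α → α} {F : β → β} {h : α → β}
    {s : Set α} (hf : MapsTo f s s) (hconj : ∀ x ∈ s, F (h x) = h (f x)) {x : α} (hx : x ∈ s) :
    ∀ k, F^[k] (h x) = h (f^[k] x)
  | 0 => rfl
  | k + 1 => by
    rw [iterate_succ_apply', iterate_succ_apply', iterate_apply_eq_of_mapsTo hf hconj hx k,
      hconj _ (hf.iterate k hx)]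

theorem omegaLimitSet_eq_image {X Y : Type*} [TopologicalSpace X] [TopologicalSpace Y]
    {f : X → X} {F : Y → Y} {h : X → Y} (hh : IsClosedEmbedding h) {x : X}
    (hiter : ∀ k, F^[k] (h x) = h (f^[k] x)) :
    omegaLimitSet F (h x) = h '' omegaLimitSet f x := by
  ext q
  simp only [omegaLimitSet, hiter, mem_image, mem_ofPred_eq]
  constructor
  · rintro ⟨φ, hφ, hq⟩
    obtain ⟨p, rfl⟩ : q ∈ range h :=
      hh.isClosed_range.mem_of_tendsto hq (Eventually.of_forall fun _ => mem_range_self _)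
    exact ⟨p, ⟨φ, hφ, hh.tendsto_nhds_iff.mpr hq⟩, rfl⟩
  · rintro ⟨p, ⟨φ, hφ, hp⟩, rfl⟩
    exact ⟨φ, hφ, hh.tendsto_nhds_iff.mp hp⟩

theorem gMap_mapsTo_Icc {δ : ℝ} (hδ0 : 0 ≤ δ) (hδ1 : δ ≤ 1) :
    MapsTo (gMap δ) (Icc 0 1) (Icc 0 1) := by
  rintro t ⟨ht0, ht1⟩
  unfold gMap
  split_ifs with ht
  · constructor <;> linarith
  · constructor <;> linarith

theorem act_mul_eq_gMap_mul {ρ δ w t : ℝ} (hρ : 0 < ρ) (hw : 0 < w) (ht : t ≤ 1) :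
    act ρ δ w (t * (ρ * w)) = gMap δ t * w := by
  have hρw : 0 < ρ * w := mul_pos hρ hw
  unfold act gMap
  by_cases hlow : t < 2 * (1 - δ)
  · rw [if_pos (by nlinarith), if_pos hlow]
    field_simp
  · rw [if_neg (by nlinarith), if_pos (by nlinarith), if_neg hlow]
    field_simp
    ring

theorem netE_smul_eq {n : ℕ} {W : Matrix (Fin n) (Fin n) ℝ} {ρ δ : ℝ}
    {v : EuclideanSpace ℝ (Fin n)} (heig : W.mulVec v = ρ • v) (hv : ∀ i, 0 < v i)
    (hρ : 0 < ρ) {t : ℝ} (ht : t ≤ 1) : netE W ρ δ v (t • v) = gMap δ t • v := by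
  ext i
  have hWv : ∑ j, W i j * v j = ρ * v i := by
    simpa [Matrix.mulVec, dotProduct] using congrFun heig i
  have hsum : ∑ j, W i j * (t * v j) = t * (ρ * v i) := by
    simp only [mul_left_comm (W i _), ← Finset.mul_sum, hWv]
  simp only [netE, PiLp.smul_apply, smul_eq_mul, hsum]
  exact act_mul_eq_gMap_mul hρ (hv i) ht

theorem claimE_general {n : ℕ} (W : Matrix (Fin n) (Fin n) ℝ) (ρ δ : ℝ)
    (v : EuclideanSpace ℝ (Fin n))
    (heig : W.mulVec v = ρ • v)
    (hv : ∀ i, 0 < v i) (hsum : ∑ i, v i = 1)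
    (h1 : 1 / 2 < 2 * (1 - δ)) (h2 : 2 * (1 - δ) < ρ) (h3 : ρ < 1)
    (C : Set ℝ) (hCsub : C ⊆ Set.Icc (0 : ℝ) 1) (hCantor : IsCantorSet C)
    (homega : ∀ t₀ ∈ C, omegaLimitSet (gMap δ) t₀ = C) :
    IsCantorSet ((fun t : ℝ => t • v) '' C) ∧
    ∀ x₀ ∈ (fun t : ℝ => t • v) '' C,
      omegaLimitSet (netE W ρ δ v) x₀ = (fun t : ℝ => t • v) '' C := by
  have hρ : 0 < ρ := by linarith
  have hv0 : v ≠ 0 := by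
    rintro rfl
    simp at hsum
  have hemb : IsClosedEmbedding fun t : ℝ => t • v := isClosedEmbedding_smul_left hv0
  refine ⟨hCantor.image_of_isClosedEmbedding hemb, ?_⟩
  rintro _ ⟨t₀, ht₀, rfl⟩
  have hiter := iterate_apply_eq_of_mapsTo (h := fun t : ℝ => t • v)
    (gMap_mapsTo_Icc (by linarith) (by linarith))
    (fun t ht => netE_smul_eq (δ := δ) heig hv hρ ht.2) (hCsub ht₀)
  rw [omegaLimitSet_eq_image hemb hiter, homega t₀ ht₀]

/-- Claim E (transport of ω-limit sets): under the network hypotheses, if `C ⊆ [0,1]`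
is a Cantor set such that the ω-limit set under `g` of every `t₀ ∈ C` equals `C`, then
`C_L = {t·v : t ∈ C}` is a Cantor set and the ω-limit set under the network map `F` of
every initial state `x₀ ∈ C_L` equals `C_L`. -/
theorem claimE {n : ℕ} (W : Matrix (Fin n) (Fin n) ℝ) (ρ δ : ℝ)
    (v : EuclideanSpace ℝ (Fin n))
    (hWpos : ∀ i j, 0 < W i j)
    (heig : W.mulVec v = ρ • v)
    (hv : ∀ i, 0 < v i) (hsum : ∑ i, v i = 1)
    (h1 : 1 / 2 < 2 * (1 - δ)) (h2 : 2 * (1 - δ) < ρ) (h3 : ρ < 1)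
    (C : Set ℝ) (hCsub : C ⊆ Set.Icc (0 : ℝ) 1) (hCantor : IsCantorSet C)
    (homega : ∀ t₀ ∈ C, omegaLimitSet (gMap δ) t₀ = C) :
    IsCantorSet ((fun t : ℝ => t • v) '' C) ∧
    ∀ x₀ ∈ (fun t : ℝ => t • v) '' C,
      omegaLimitSet (netE W ρ δ v) x₀ = (fun t : ℝ => t • v) '' C :=
  claimE_general W ρ δ v heig hv hsum h1 h2 h3 C hCsub hCantor homega
end

section
/- (Transport of sensitive dependence) Under the network hypotheses, let t_0 ∈ [0,1] and η > 0 be such that for every ε > 0 there exist s_0 ∈ [0,1] and k ∈ ℕ with |s_0 − t_0| ≤ ε and |g^k(s_0) − g^k(t_0)| ≥ η. Then the network map F has sensitive dependence on initial conditions at the point x_0 = t_0·v of the state space X = [0,1]^n, with sensitivity constant η·‖v‖: for every ε > 0 there exist y_0 ∈ X and k ∈ ℕ with ‖y_0 − x_0‖ ≤ ε and ‖F^k(y_0) − F^k(x_0)‖ ≥ η·‖v‖, where ‖·‖ is the Euclidean norm. -/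
/-!
On the ray through the positive eigenvector `v` the network acts like `g`: since `W (t • v) = t ρ • v`,
the thresholds of every `f_i` are crossed exactly where `g` switches branches, so
`F (t • v) = g t • v` for `t ≤ 1`. Hence `F^[k] (s • v) - F^[k] (t • v) = (g^[k] s - g^[k] t) • v`,
and the segment `[0, 1] • v` lies in the unit cube because `∑ v_i = 1`; scaling by `‖v‖` transports
the sensitivity of `g` to `F`.
-/

open Finset

lemma gMap_mapsTo_Iic {δ : ℝ} (hδ : δ ≤ 3 / 2) : Set.MapsTo (gMap δ) (Set.Iic 1) (Set.Iic 1) := by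
  intro t (ht : t ≤ 1)
  simp only [gMap, Set.mem_Iic]
  split_ifs <;> linarith

lemma act_mul_eigenvalue {ρ δ v t : ℝ} (hρ : 0 < ρ) (hv : 0 < v) (ht : t ≤ 1) :
    act ρ δ v (t * (ρ * v)) = gMap δ t * v := by
  have hρv : 0 < ρ * v := mul_pos hρ hv
  unfold act gMap
  by_cases hc : t < 2 * (1 - δ)
  · rw [if_pos (by nlinarith), if_pos hc]
    field_simp
  · rw [if_neg (by nlinarith), if_pos (by nlinarith), if_neg hc]
    field_simp
    ring

section Network

variable {n : ℕ} {W : Matrix (Fin n) (Fin n) ℝ} {ρ δ : ℝ} {v : EuclideanSpace ℝ (Fin n)}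

lemma netE_smul_eigenvector (hρ : 0 < ρ) (hv : ∀ i, 0 < v i) (heig : W.mulVec v = ρ • v)
    {t : ℝ} (ht : t ≤ 1) : netE W ρ δ v (t • v) = gMap δ t • v := by
  ext i
  have hWv : ∑ j, W i j * (t * v j) = t * (ρ * v i) := by
    have := congrFun heig i
    simp only [Matrix.mulVec, dotProduct, Pi.smul_apply, smul_eq_mul] at this
    simp only [mul_left_comm _ t, ← mul_sum, this]
  simp only [netE, PiLp.smul_apply, smul_eq_mul, hWv, act_mul_eigenvalue hρ (hv i) ht]

lemma iterate_netE_smul_eigenvector (hρ : 0 < ρ) (hδ : δ ≤ 3 / 2) (hv : ∀ i, 0 < v i)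
    (heig : W.mulVec v = ρ • v) (k : ℕ) {t : ℝ} (ht : t ≤ 1) :
    (netE W ρ δ v)^[k] (t • v) = (gMap δ)^[k] t • v := by
  induction k generalizing t with
  | zero => rfl
  | succ k ih =>
    rw [Function.iterate_succ_apply, Function.iterate_succ_apply,
      netE_smul_eigenvector hρ hv heig ht, ih (gMap_mapsTo_Iic hδ ht)]

end Network

lemma smul_mem_Icc_of_sum_eq_one {ι : Type*} [Fintype ι] {v : ι → ℝ} (hv : ∀ i, 0 ≤ v i)
    (hsum : ∑ i, v i = 1) {s : ℝ} (hs : s ∈ Set.Icc (0 : ℝ) 1) (i : ι) :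
    s * v i ∈ Set.Icc (0 : ℝ) 1 := by
  have hvi : v i ≤ 1 := hsum ▸ single_le_sum (fun j _ => hv j) (mem_univ i)
  exact ⟨mul_nonneg hs.1 (hv i), mul_le_one₀ hs.2 (hv i) hvi⟩

theorem transport_sensitivity_general {n : ℕ} (W : Matrix (Fin n) (Fin n) ℝ) (ρ δ : ℝ)
    (v : EuclideanSpace ℝ (Fin n))
    (heig : W.mulVec v = ρ • v)
    (hv : ∀ i, 0 < v i) (hsum : ∑ i, v i = 1)
    (h1 : 1 / 2 < 2 * (1 - δ)) (h2 : 2 * (1 - δ) < ρ)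
    (t₀ : ℝ) (ht₀ : t₀ ∈ Set.Icc (0 : ℝ) 1)
    (η : ℝ)
    (hsens : ∀ ε > (0 : ℝ), ∃ s₀ ∈ Set.Icc (0 : ℝ) 1, ∃ k : ℕ,
      |s₀ - t₀| ≤ ε ∧ η ≤ |(gMap δ)^[k] s₀ - (gMap δ)^[k] t₀|) :
    ∀ ε > (0 : ℝ), ∃ y₀ : EuclideanSpace ℝ (Fin n),
      (∀ i, y₀ i ∈ Set.Icc (0 : ℝ) 1) ∧ ∃ k : ℕ,
        ‖y₀ - t₀ • v‖ ≤ ε ∧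
        η * ‖v‖ ≤ ‖(netE W ρ δ v)^[k] y₀ - (netE W ρ δ v)^[k] (t₀ • v)‖ := by
  have hρ : 0 < ρ := by linarith
  have hδ : δ ≤ 3 / 2 := by linarith
  have hv_norm : 0 < ‖v‖ := norm_pos_iff.mpr fun h => by simp [h] at hsum
  intro ε hε
  obtain ⟨s₀, hs₀, k, hclose, hfar⟩ := hsens (ε / ‖v‖) (div_pos hε hv_norm)
  refine ⟨s₀ • v, smul_mem_Icc_of_sum_eq_one (fun i => (hv i).le) hsum hs₀, k, ?_, ?_⟩
  · rw [← sub_smul, norm_smul, Real.norm_eq_abs, ← le_div_iff₀ hv_norm]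
    exact hclose
  · rw [iterate_netE_smul_eigenvector hρ hδ hv heig k hs₀.2,
      iterate_netE_smul_eigenvector hρ hδ hv heig k ht₀.2, ← sub_smul, norm_smul, Real.norm_eq_abs]
    exact mul_le_mul_of_nonneg_right hfar hv_norm.le

/-- Transport of sensitive dependence: under the network hypotheses, if `g` has
sensitive dependence on initial conditions at `t₀ ∈ [0,1]` with sensitivity constant
`η > 0`, then the network map `F` has sensitive dependence on initial conditions at
`x₀ = t₀·v ∈ X = [0,1]^n` with sensitivity constant `η·‖v‖` (Euclidean norm). -/
theorem transport_sensitivity {n : ℕ} (W : Matrix (Fin n) (Fin n) ℝ) (ρ δ : ℝ)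
    (v : EuclideanSpace ℝ (Fin n))
    (hWpos : ∀ i j, 0 < W i j)
    (heig : W.mulVec v = ρ • v)
    (hv : ∀ i, 0 < v i) (hsum : ∑ i, v i = 1)
    (h1 : 1 / 2 < 2 * (1 - δ)) (h2 : 2 * (1 - δ) < ρ) (h3 : ρ < 1)
    (t₀ : ℝ) (ht₀ : t₀ ∈ Set.Icc (0 : ℝ) 1)
    (η : ℝ) (hη : 0 < η)
    (hsens : ∀ ε > (0 : ℝ), ∃ s₀ ∈ Set.Icc (0 : ℝ) 1, ∃ k : ℕ,
      |s₀ - t₀| ≤ ε ∧ η ≤ |(gMap δ)^[k] s₀ - (gMap δ)^[k] t₀|) :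
    ∀ ε > (0 : ℝ), ∃ y₀ : EuclideanSpace ℝ (Fin n),
      (∀ i, y₀ i ∈ Set.Icc (0 : ℝ) 1) ∧ ∃ k : ℕ,
        ‖y₀ - t₀ • v‖ ≤ ε ∧
        η * ‖v‖ ≤ ‖(netE W ρ δ v)^[k] y₀ - (netE W ρ δ v)^[k] (t₀ • v)‖ :=
  transport_sensitivity_general W ρ δ v heig hv hsum h1 h2 t₀ ht₀ η hsens
end
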